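/- arXiv:2503.02864 — 4 statements merged into one kernel-verified Lean document; each statement's English description precedes it below -/
import Mathlib

section
/- Let σ be a permutation of a finite type with cycle type {{ℓ_1, …, ℓ_k}} and let x be a natural number. Then the cycle type of σ^x is the multiset obtained from {{ℓ_1, …, ℓ_k}} by replacing each ℓ_t with gcd(x, ℓ_t) copies of ℓ_t / gcd(x, ℓ_t), and then discarding all entries equal to 1. -/
/-!
Powers of disjoint permutations are disjoint, so it suffices to treat a single cycle `σ` of
length `n`. If `n ∤ x`, then `σ ^ x` moves the same `n` points as `σ`, and all its cycles have
the same length `orderOf (σ ^ x) = n / gcd x n`: a cycle of length `m` of `σ ^ x` gives a point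
of the support of `σ` fixed by `σ ^ (x * m)`, which forces `σ ^ (x * m) = 1`. Counting the `n`
moved points then yields `gcd x n` such cycles.
-/

open Finset

namespace Equiv.Perm

variable {α : Type*} [Fintype α] [DecidableEq α]

theorem exists_mem_support_pow_apply_eq_self_of_mem_cycleType {f : Perm α} {m : ℕ}
    (hm : m ∈ f.cycleType) : ∃ y ∈ f.support, (f ^ m) y = y := by
  rw [cycleType_def, Multiset.mem_map] at hm
  obtain ⟨c, hc, rfl⟩ := hm
  obtain ⟨y, hy⟩ := (mem_cycleFactorsFinset_iff.mp hc).1.nonempty_support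
  refine ⟨y, mem_cycleFactorsFinset_support_le hc hy, ?_⟩
  have := pow_mod_card_support_cycleOf_self_apply f #c.support y
  rwa [← cycle_is_cycleOf hy hc, Nat.mod_self, pow_zero, eq_comm] at this

theorem IsCycle.eq_orderOf_pow_of_mem_cycleType_pow {σ : Perm α} (hσ : σ.IsCycle) {x m : ℕ}
    (hm : m ∈ (σ ^ x).cycleType) : m = orderOf (σ ^ x) := by
  obtain ⟨y, hy, hfix⟩ := exists_mem_support_pow_apply_eq_self_of_mem_cycleType hm
  have hσy : σ y ≠ y := mem_support.mp (support_pow_le σ x hy)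
  refine (dvd_of_mem_cycleType hm).antisymm (orderOf_dvd_of_pow_eq_one ?_)
  rw [← pow_mul] at hfix ⊢
  exact (hσ.pow_eq_one_iff' hσy).mpr hfix

theorem IsCycle.cycleType_pow {σ : Perm α} (hσ : σ.IsCycle) (x : ℕ) :
    (σ ^ x).cycleType = Multiset.filter (· ≠ 1)
      (Multiset.replicate (Nat.gcd x #σ.support) (#σ.support / Nat.gcd x #σ.support)) := by
  set n := #σ.support
  have hn : 0 < n := by have := hσ.two_le_card_support; omega
  by_cases hnx : n ∣ x
  · have hσx : σ ^ x = 1 := orderOf_dvd_iff_pow_eq_one.mp (hσ.orderOf ▸ hnx)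
    rw [hσx, cycleType_one, Nat.gcd_eq_right hnx, Nat.div_self hn, eq_comm, Multiset.filter_eq_nil]
    intro a ha
    simp [Multiset.eq_of_mem_replicate ha]
  have horder : orderOf (σ ^ x) = n / Nat.gcd x n := by
    rw [orderOf_pow, hσ.orderOf, Nat.gcd_comm]
  have hall : ∀ m ∈ (σ ^ x).cycleType, m = n / Nat.gcd x n := fun m hm =>
    horder ▸ hσ.eq_orderOf_pow_of_mem_cycleType_pow hm
  have hd : 0 < n / Nat.gcd x n :=
    Nat.div_pos (Nat.gcd_le_right _ hn) (Nat.gcd_pos_of_pos_right _ hn)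
  have hcard : Multiset.card (σ ^ x).cycleType = Nat.gcd x n := by
    refine Nat.eq_of_mul_eq_mul_right hd ?_
    rw [← smul_eq_mul, ← Multiset.sum_replicate, ← Multiset.eq_replicate_of_mem hall,
      sum_cycleType, hσ.support_pow_eq_iff.mpr (hσ.orderOf ▸ hnx),
      Nat.mul_div_cancel' (Nat.gcd_dvd_right x n)]
  have hd_ne_one : n / Nat.gcd x n ≠ 1 := fun h =>
    hnx (Nat.eq_of_dvd_of_div_eq_one (Nat.gcd_dvd_right x n) h ▸ Nat.gcd_dvd_left x n)
  rw [Multiset.filter_eq_self.mpr fun a ha => Multiset.eq_of_mem_replicate ha ▸ hd_ne_one,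
    Multiset.eq_replicate]
  exact ⟨hcard, hall⟩

end Equiv.Perm

/-- If `σ` has cycle type `{{ℓ_1, …, ℓ_k}}`, then the cycle type of `σ ^ x` is obtained by
replacing each `ℓ_t` with `gcd(x, ℓ_t)` copies of `ℓ_t / gcd(x, ℓ_t)` and discarding the
entries equal to `1`. -/
theorem pow_cycleType {α : Type*} [Fintype α] [DecidableEq α]
    (σ : Equiv.Perm α) (x : ℕ) :
    (σ ^ x).cycleType =
      Multiset.filter (fun c => c ≠ 1)
        (σ.cycleType.bind fun ℓ =>
          Multiset.replicate (Nat.gcd x ℓ) (ℓ / Nat.gcd x ℓ)) := by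
  induction σ using Equiv.Perm.cycle_induction_on with
  | base_one => simp
  | base_cycles σ hσ =>
    rw [hσ.cycleType, Multiset.singleton_bind]
    exact hσ.cycleType_pow x
  | induction_disjoint σ τ hd _ hσ hτ =>
    rw [hd.commute.mul_pow, (hd.pow_disjoint_pow x x).cycleType_mul, hd.cycleType_mul,
      Multiset.add_bind, Multiset.filter_add, hσ, hτ]
end

section
/- Let π be a permutation of a finite type and let i be a natural number. Then orderOf π = orderOf (π^i) if and only if π and π^i have the same cycle type. -/
/-!
`orderOf (π ^ i) = orderOf π / gcd (orderOf π) i`, so equal orders mean `i` is coprime to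
`orderOf π`. Then `i` is coprime to the length of every cycle `c` of `π`, so `c ^ i` is again a
cycle with the same support, and the `c ^ i` form the disjoint cycle decomposition of `π ^ i`.
Conversely, the order is the lcm of the cycle type.
-/

open Equiv.Perm

theorem Finset.noncommProd_pow {ι M : Type*} [Monoid M] (s : Finset ι) (f : ι → M)
    (comm : (s : Set ι).Pairwise fun a b => Commute (f a) (f b)) (n : ℕ) :
    s.noncommProd f comm ^ n =
      s.noncommProd (f · ^ n) (comm.mono' fun _ _ h => h.pow_pow n n) := by
  classical
  induction s using Finset.induction_on with
  | empty => simp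
  | insert a s ha ih =>
    rw [noncommProd_insert_of_notMem _ _ _ _ ha, noncommProd_insert_of_notMem _ _ _ _ ha,
      (noncommProd_commute _ _ _ _ fun b hb => comm (mem_insert_self a s)
        (mem_insert_of_mem hb) (ne_of_mem_of_not_mem hb ha).symm).mul_pow, ih]

namespace Equiv.Perm

variable {α : Type*} [Fintype α] [DecidableEq α]

theorem cycleType_eq_sum_cycleType_cycleFactorsFinset (π : Perm α) :
    π.cycleType = ∑ c ∈ π.cycleFactorsFinset, c.cycleType := by
  conv_lhs => rw [← cycleFactorsFinset_noncommProd π]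
  exact Disjoint.cycleType_noncommProd π.cycleFactorsFinset_pairwise_disjoint

theorem coprime_orderOf_of_mem_cycleFactorsFinset {π c : Perm α} {i : ℕ}
    (h : i.Coprime (orderOf π)) (hc : c ∈ π.cycleFactorsFinset) : i.Coprime (orderOf c) := by
  refine h.coprime_dvd_right (dvd_of_mem_cycleType ?_)
  rw [(mem_cycleFactorsFinset_iff.mp hc).1.orderOf, cycleType_def]
  exact Multiset.mem_map_of_mem (Finset.card ∘ support) hc

theorem cycleType_pow_of_coprime (π : Perm α) {i : ℕ} (h : i.Coprime (orderOf π)) :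
    (π ^ i).cycleType = π.cycleType := by
  have hdisj : (π.cycleFactorsFinset : Set (Perm α)).Pairwise
      fun c d => Disjoint (c ^ i) (d ^ i) :=
    π.cycleFactorsFinset_pairwise_disjoint.mono' fun _ _ hcd => hcd.pow_disjoint_pow i i
  calc (π ^ i).cycleType
      = (π.cycleFactorsFinset.noncommProd (· ^ i)
          (hdisj.imp fun _ _ => Disjoint.commute)).cycleType := by
        conv_lhs => rw [← cycleFactorsFinset_noncommProd π, Finset.noncommProd_pow]
        rfl
    _ = ∑ c ∈ π.cycleFactorsFinset, (c ^ i).cycleType := Disjoint.cycleType_noncommProd hdisj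
    _ = ∑ c ∈ π.cycleFactorsFinset, c.cycleType := Finset.sum_congr rfl fun c hc => by
        have hcop := coprime_orderOf_of_mem_cycleFactorsFinset h hc
        have hcycle := (mem_cycleFactorsFinset_iff.mp hc).1
        rw [(hcycle.pow_iff.mpr hcop).cycleType, hcycle.cycleType, support_pow_coprime hcop]
    _ = π.cycleType := (cycleType_eq_sum_cycleType_cycleFactorsFinset π).symm

end Equiv.Perm

/-- For a permutation `π` and `i : ℕ`, we have `orderOf π = orderOf (π ^ i)` if and only if
`π` and `π ^ i` have the same cycle type. -/
theorem orderOf_eq_iff_cycleType_eq {α : Type*} [Fintype α] [DecidableEq α]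
    (π : Equiv.Perm α) (i : ℕ) :
    orderOf π = orderOf (π ^ i) ↔ π.cycleType = (π ^ i).cycleType := by
  refine ⟨fun h => ?_, fun h => by rw [← lcm_cycleType, ← lcm_cycleType, h]⟩
  rw [orderOf_pow, eq_comm, Nat.div_eq_self, or_iff_right (orderOf_pos π).ne', ← Nat.Coprime,
    Nat.coprime_comm] at h
  exact (cycleType_pow_of_coprime π h).symm
end

section
/- Let π and ρ be permutations of a finite type such that orderOf ρ divides orderOf π, and set d = orderOf π / orderOf ρ. Then there exists a natural number q such that π^q and ρ have the same cycle type if and only if π^d and ρ have the same cycle type. -/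
/-!
Write `n = orderOf π`. A power `σ ^ k` with `k` coprime to `orderOf σ` has the cycle type of `σ`,
so `π ^ q = (π ^ g) ^ (q / g)` with `g = gcd n q` has the cycle type of `π ^ g`. Equal cycle
types force equal orders, and `orderOf (π ^ q) = n / g`; hence if `π ^ q` has the cycle type of
`ρ` then `g = n / orderOf ρ`.
-/

namespace Equiv.Perm

variable {α : Type*} [Fintype α] [DecidableEq α]

theorem cycleType_pow_of_coprime_s4 (σ : Perm α) {k : ℕ} (hk : k.Coprime (orderOf σ)) :
    (σ ^ k).cycleType = σ.cycleType := by
  induction σ using cycle_induction_on generalizing k with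
  | base_one => simp
  | base_cycles σ hσ =>
    have hσk : ¬orderOf σ ∣ k := fun hdvd =>
      hσ.ne_one (orderOf_eq_one_iff.mp (Nat.eq_one_of_dvd_coprimes hk hdvd dvd_rfl))
    rw [(hσ.pow_iff.mpr hk).cycleType, hσ.cycleType, hσ.support_pow_eq_iff.mpr hσk]
  | induction_disjoint σ τ hd _ ihσ ihτ =>
    rw [hd.orderOf] at hk
    rw [hd.commute.mul_pow, (hd.pow_disjoint_pow k k).cycleType_mul, hd.cycleType_mul,
      ihσ (hk.coprime_dvd_right (Nat.dvd_lcm_left _ _)),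
      ihτ (hk.coprime_dvd_right (Nat.dvd_lcm_right _ _))]

theorem cycleType_pow_eq_cycleType_pow_gcd (π : Perm α) (q : ℕ) :
    (π ^ q).cycleType = (π ^ (orderOf π).gcd q).cycleType := by
  have hcop : (q / (orderOf π).gcd q).Coprime (orderOf (π ^ (orderOf π).gcd q)) := by
    rw [orderOf_pow, Nat.gcd_eq_right (Nat.gcd_dvd_left _ _), Nat.gcd_comm (orderOf π) q]
    exact Nat.coprime_div_gcd_div_gcd (Nat.gcd_pos_of_pos_right q (orderOf_pos π))
  rw [← cycleType_pow_of_coprime_s4 _ hcop, ← pow_mul, Nat.mul_div_cancel' (Nat.gcd_dvd_right _ _)]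

theorem orderOf_eq_of_cycleType_eq {σ τ : Perm α} (h : σ.cycleType = τ.cycleType) :
    orderOf σ = orderOf τ := by
  rw [← lcm_cycleType, h, lcm_cycleType]

end Equiv.Perm

theorem exists_pow_cycleType_iff_general {α : Type*} [Fintype α] [DecidableEq α]
    (π ρ : Equiv.Perm α) :
    (∃ q : ℕ, (π ^ q).cycleType = ρ.cycleType) ↔
      (π ^ (orderOf π / orderOf ρ)).cycleType = ρ.cycleType := by
  refine ⟨fun ⟨q, hq⟩ => ?_, fun hd => ⟨_, hd⟩⟩
  have hρ : orderOf ρ = orderOf π / (orderOf π).gcd q := by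
    rw [← Equiv.Perm.orderOf_eq_of_cycleType_eq hq, orderOf_pow]
  rw [hρ, Nat.div_div_self (Nat.gcd_dvd_left _ _) (orderOf_pos π).ne', ← hq]
  exact (Equiv.Perm.cycleType_pow_eq_cycleType_pow_gcd π q).symm

/-- If `orderOf ρ` divides `orderOf π` and `d = orderOf π / orderOf ρ`, then some power of `π`
has the same cycle type as `ρ` if and only if `π ^ d` has the same cycle type as `ρ`. -/
theorem exists_pow_cycleType_iff {α : Type*} [Fintype α] [DecidableEq α]
    (π ρ : Equiv.Perm α) (h : orderOf ρ ∣ orderOf π) :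
    (∃ q : ℕ, (π ^ q).cycleType = ρ.cycleType) ↔
      (π ^ (orderOf π / orderOf ρ)).cycleType = ρ.cycleType :=
  exists_pow_cycleType_iff_general π ρ
end

section
/- With the exact-3-hitting-set construction of ρ, π_1, π_2 as described, suppose x_1, x_2 are natural numbers such that π_1^{x_1} π_2^{x_2} has the same cycle type as ρ. Then for all i ∈ [n] and j ∈ [m]: x_1 ≢ 0 mod p_i, x_1 ≢ 0 mod p_{n+i}, and x_1 ≢ 0 mod q_j. -/
/-! Exact-3-hitting-set construction.  The ground set is `Fin n`; the `j`-th clause is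
`{idx j 0, idx j 1, idx j 2}` with `idx j` strictly monotone.  `p i` is the `(i+1)`-st prime
greater than `3` (zero-indexed, so `p 0 = 5`), `q n j` is the `(j+1)`-st of the `m` primes
following the first `2n` primes greater than `3`.  Every permutation group
`Sym(ℓ)`-component is realized on `Fin ℓ`, and the `ℓ`-cycle `([ℓ]) = (1,2,…,ℓ)` is realized
as `finRotate ℓ`.  Cycle types are computed in the symmetric group on the disjoint union of
all components (fixpoints are discarded by `Equiv.Perm.cycleType`, so the padding of the
second block of components to degree `p_n^3 q_j` is immaterial). -/

namespace HittingSet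

/-- `p i` is the `(i+1)`-st prime greater than 3 (zero-indexed): `p 0 = 5`. -/
noncomputable def p (i : ℕ) : ℕ := Nat.nth Nat.Prime (i + 2)

/-- `q n j` is the `(j+1)`-st prime following the first `2n` primes greater than 3. -/
noncomputable def q (n j : ℕ) : ℕ := Nat.nth Nat.Prime (2 * n + 2 + j)

/-- `r j = q_j ⬝ p_{i_1} p_{i_2} p_{i_3}` for the clause `C_j = {i_1 < i_2 < i_3}`. -/
noncomputable def r (n : ℕ) {m : ℕ} (idx : Fin m → Fin 3 → Fin n) (j : Fin m) : ℕ :=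
  q n j * (p (idx j 0) * p (idx j 1) * p (idx j 2))

/-- The underlying set of the permutation group
`G = ∏_{i=1}^n Sym(p_i p_{n+i}) × ∏_{j=1}^m Sym(r_j)^6` (embedded in a symmetric group). -/
abbrev Omega (n : ℕ) {m : ℕ} (idx : Fin m → Fin 3 → Fin n) : Type :=
  (Σ i : Fin n, Fin (p i * p (n + i))) ⊕ (Σ j : Fin m, Σ _d : Fin 6, Fin (r n idx j))

/-- `ρ = (ζ_1,…,ζ_n,η_1,…,η_m)` with `ζ_i = ([p_i p_{n+i}])` and
`η_j = (([r_j])^{p_{i_1}p_{i_2}p_{i_3}}, ([r_j])^{p_{i_1}}, ([r_j])^{p_{i_2}},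
([r_j])^{p_{i_3}}, ([r_j]), ([r_j]))`. -/
noncomputable def rho (n : ℕ) {m : ℕ} (idx : Fin m → Fin 3 → Fin n) : Equiv.Perm (Omega n idx) :=
  Equiv.sumCongr
    (Equiv.sigmaCongrRight fun _i => finRotate _)
    (Equiv.sigmaCongrRight fun j => Equiv.sigmaCongrRight fun d =>
      finRotate (r n idx j) ^
        (![p (idx j 0) * p (idx j 1) * p (idx j 2),
           p (idx j 0), p (idx j 1), p (idx j 2), 1, 1] d))

/-- `π_1 = (α_1,…,α_n,β_1,…,β_m)` with `α_i = ([p_i p_{n+i}])` and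
`β_j = (([r_j])^{s_{j,1}}, …, ([r_j])^{s_{j,6}})`. -/
noncomputable def pi1 (n : ℕ) {m : ℕ} (idx : Fin m → Fin 3 → Fin n) (s : Fin m → ℕ → ℕ) :
    Equiv.Perm (Omega n idx) :=
  Equiv.sumCongr
    (Equiv.sigmaCongrRight fun _i => finRotate _)
    (Equiv.sigmaCongrRight fun j => Equiv.sigmaCongrRight fun d =>
      finRotate (r n idx j) ^ s j d.val)

/-- `π_2 = (γ_1,…,γ_n,δ_1,…,δ_m)` with `γ_i = id` and
`δ_j = (([r_j])^{t_j}, …, ([r_j])^{t_j})`. -/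
noncomputable def pi2 (n : ℕ) {m : ℕ} (idx : Fin m → Fin 3 → Fin n) (t : Fin m → ℕ) :
    Equiv.Perm (Omega n idx) :=
  Equiv.sumCongr (Equiv.refl _)
    (Equiv.sigmaCongrRight fun j => Equiv.sigmaCongrRight fun _d =>
      finRotate (r n idx j) ^ t j)

end HittingSet

/-! A cycle length of a permutation is the minimal period of a point it moves. On a block `Fin ℓ`
on which a permutation acts as `([ℓ])^e`, every point has minimal period `ℓ / gcd(ℓ, e)`.
The prime `p_{n+i}` divides only the block length `p_i p_{n+i}` of `ζ_i`, and `q_j` divides only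
the block lengths `r_j` of `η_j`. So a cycle of length `p_i p_{n+i}` of `π_1^{x_1} π_2^{x_2}` comes
from the `i`-th block, where `π_1^{x_1} π_2^{x_2}` acts as `([p_i p_{n+i}])^{x_1}`, and forces
`gcd(p_i p_{n+i}, x_1) = 1`; a cycle of length `r_j` forces `gcd(r_j, s_{j,d} x_1 + t_j x_2) = 1`
for some `d`, which rules out `q_j ∣ x_1` because `q_j ∣ t_j`. -/

open Function

theorem Function.Semiconj.minimalPeriod_eq {α β : Type*} {g : α → β} {fa : α → α} {fb : β → β}
    (h : Semiconj g fa fb) (hg : Injective g) (x : α) :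
    minimalPeriod fb (g x) = minimalPeriod fa x := by
  rw [minimalPeriod_eq_minimalPeriod_iff]
  intro k
  simp only [IsPeriodicPt, IsFixedPt, ← (h.iterate_right k).eq, hg.eq_iff]

theorem Nat.nth_prime_dvd_nth_prime_iff {a b : ℕ} : nth Prime a ∣ nth Prime b ↔ a = b := by
  rw [prime_dvd_prime_iff_eq (prime_nth_prime a) (prime_nth_prime b)]
  exact (nth_strictMono infinite_setOfPred_prime).injective.eq_iff

namespace Equiv.Perm

variable {α : Type*}

theorem sumCongr_pow {β : Type*} (e : Perm α) (f : Perm β) (k : ℕ) :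
    sumCongr e f ^ k = sumCongr (e ^ k) (f ^ k) :=
  (map_pow (sumCongrHom α β) (e, f) k).symm

theorem sigmaCongrRight_pow {β : α → Type*} (F : ∀ a, Perm (β a)) (k : ℕ) :
    sigmaCongrRight F ^ k = sigmaCongrRight fun a => F a ^ k :=
  (map_pow (sigmaCongrRightHom β) F k).symm

theorem minimalPeriod_sumCongr_inl {β : Type*} (e : Perm α) (f : Perm β) (x : α) :
    minimalPeriod (sumCongr e f) (Sum.inl x) = minimalPeriod e x :=
  (show Semiconj Sum.inl e (sumCongr e f) from fun _ => rfl).minimalPeriod_eq Sum.inl_injective x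

theorem minimalPeriod_sumCongr_inr {β : Type*} (e : Perm α) (f : Perm β) (y : β) :
    minimalPeriod (sumCongr e f) (Sum.inr y) = minimalPeriod f y :=
  (show Semiconj Sum.inr f (sumCongr e f) from fun _ => rfl).minimalPeriod_eq Sum.inr_injective y

theorem minimalPeriod_sigmaCongrRight {β : α → Type*} (F : ∀ a, Perm (β a)) (a : α) (x : β a) :
    minimalPeriod (sigmaCongrRight F) ⟨a, x⟩ = minimalPeriod (F a) x :=
  (show Semiconj (Sigma.mk a) (F a) (sigmaCongrRight F) from fun _ => rfl).minimalPeriod_eq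
    sigma_mk_injective x

variable [Fintype α] [DecidableEq α] {σ : Perm α} {x : α} {L : ℕ}

theorem minimalPeriod_eq_card_support_cycleOf (hx : x ∈ σ.support) :
    minimalPeriod σ x = (σ.cycleOf x).support.card := by
  have hc := σ.isCycle_cycleOf (mem_support.mp hx)
  rw [← hc.orderOf, ← Nat.dvd_right_iff_eq]
  intro k
  rw [← isPeriodicPt_iff_minimalPeriod_dvd, orderOf_dvd_iff_pow_eq_one,
    hc.pow_eq_one_iff' (by rwa [cycleOf_apply_self, ← mem_support]), cycleOf_pow_apply_self,
    IsPeriodicPt, IsFixedPt, coe_pow]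

theorem mem_cycleType_iff_exists_minimalPeriod :
    L ∈ σ.cycleType ↔ ∃ x ∈ σ.support, minimalPeriod σ x = L := by
  simp only [cycleType_def, Multiset.mem_map, Finset.mem_val, comp_apply]
  constructor
  · rintro ⟨c, hc, rfl⟩
    obtain ⟨x, hx⟩ := (mem_cycleFactorsFinset_iff.mp hc).1.nonempty_support
    have hxσ := mem_cycleFactorsFinset_support_le hc hx
    exact ⟨x, hxσ, by rw [minimalPeriod_eq_card_support_cycleOf hxσ, cycle_is_cycleOf hx hc]⟩
  · rintro ⟨x, hx, rfl⟩
    exact ⟨σ.cycleOf x, cycleOf_mem_cycleFactorsFinset_iff.mpr hx,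
      (minimalPeriod_eq_card_support_cycleOf hx).symm⟩

theorem mem_cycleType_of_minimalPeriod_eq (h : minimalPeriod σ x = L) (hL : 2 ≤ L) :
    L ∈ σ.cycleType := by
  refine mem_cycleType_iff_exists_minimalPeriod.mpr ⟨x, mem_support.mpr fun hfix => ?_, h⟩
  rw [minimalPeriod_eq_one_iff_isFixedPt.mpr hfix] at h
  omega

end Equiv.Perm

open Fin.NatCast in
theorem finRotate_pow_apply {ℓ : ℕ} [NeZero ℓ] (k : ℕ) (x : Fin ℓ) :
    (finRotate ℓ ^ k) x = x + (k : Fin ℓ) := by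
  induction k with
  | zero => simp
  | succ k ih => rw [pow_succ', Equiv.Perm.mul_apply, ih, finRotate_apply, Nat.cast_succ, add_assoc]

theorem minimalPeriod_finRotate {ℓ : ℕ} (x : Fin ℓ) : minimalPeriod (finRotate ℓ) x = ℓ := by
  have := x.neZero
  rw [← Nat.dvd_right_iff_eq]
  intro k
  rw [← isPeriodicPt_iff_minimalPeriod_dvd, IsPeriodicPt, IsFixedPt, Equiv.Perm.iterate_eq_pow,
    finRotate_pow_apply, add_eq_left, Fin.natCast_eq_zero]

theorem minimalPeriod_finRotate_pow {ℓ : ℕ} (e : ℕ) (x : Fin ℓ) :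
    minimalPeriod (finRotate ℓ ^ e) x = ℓ / ℓ.gcd e := by
  have hx : x ∈ periodicPts (finRotate ℓ) := by
    rw [← minimalPeriod_pos_iff_mem_periodicPts, minimalPeriod_finRotate]
    exact x.pos
  rw [Equiv.Perm.coe_pow, minimalPeriod_iterate_eq_div_gcd' hx, minimalPeriod_finRotate]

namespace HittingSet

open Equiv.Perm

theorem prime_p (a : ℕ) : (p a).Prime := Nat.prime_nth_prime _

theorem prime_q (n j : ℕ) : (q n j).Prime := Nat.prime_nth_prime _

theorem two_le_p_mul_p (a b : ℕ) : 2 ≤ p a * p b :=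
  (prime_p a).two_le.trans (Nat.le_mul_of_pos_right _ (prime_p b).pos)

variable {n m : ℕ} (idx : Fin m → Fin 3 → Fin n)

theorem two_le_r (j : Fin m) : 2 ≤ r n idx j :=
  (prime_q n j).two_le.trans (Nat.le_mul_of_pos_right _
    (Nat.mul_pos (Nat.mul_pos (prime_p _).pos (prime_p _).pos) (prime_p _).pos))

theorem not_p_dvd_r (i : Fin n) (j : Fin m) : ¬ p (n + i) ∣ r n idx j := by
  have := (idx j 0).isLt
  have := (idx j 1).isLt
  have := (idx j 2).isLt
  simp only [r, p, q, (Nat.prime_nth_prime _).dvd_mul, Nat.nth_prime_dvd_nth_prime_iff]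
  omega

theorem eq_of_q_dvd_r {j j' : Fin m} (h : q n j ∣ r n idx j') : j = j' := by
  have := (idx j' 0).isLt
  have := (idx j' 1).isLt
  have := (idx j' 2).isLt
  simp only [r, p, q, (Nat.prime_nth_prime _).dvd_mul, Nat.nth_prime_dvd_nth_prime_iff] at h
  omega

theorem not_q_dvd_p_mul_p (i : Fin n) (j : Fin m) : ¬ q n j ∣ p i * p (n + i) := by
  simp only [p, q, (Nat.prime_nth_prime _).dvd_mul, Nat.nth_prime_dvd_nth_prime_iff]
  omega

theorem eq_of_p_mul_p_dvd {i i' : Fin n} (h : p i * p (n + i) ∣ p i' * p (n + i')) : i = i' := by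
  have h' := (dvd_mul_left _ _).trans h
  simp only [p, (Nat.prime_nth_prime _).dvd_mul, Nat.nth_prime_dvd_nth_prime_iff] at h'
  omega

theorem minimalPeriod_rho_inl (i : Fin n) (a : Fin (p i * p (n + i))) :
    minimalPeriod (rho n idx) (Sum.inl ⟨i, a⟩) = p i * p (n + i) := by
  rw [rho, minimalPeriod_sumCongr_inl, minimalPeriod_sigmaCongrRight, minimalPeriod_finRotate]

theorem minimalPeriod_rho_inr_four (j : Fin m) (a : Fin (r n idx j)) :
    minimalPeriod (rho n idx) (Sum.inr ⟨j, 4, a⟩) = r n idx j := by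
  rw [rho, minimalPeriod_sumCongr_inr, minimalPeriod_sigmaCongrRight,
    minimalPeriod_sigmaCongrRight]
  exact minimalPeriod_finRotate a

theorem p_mul_p_mem_cycleType_rho (i : Fin n) : p i * p (n + i) ∈ (rho n idx).cycleType :=
  mem_cycleType_of_minimalPeriod_eq
    (minimalPeriod_rho_inl idx i ⟨0, (two_le_p_mul_p _ _).trans_lt' two_pos⟩) (two_le_p_mul_p _ _)

theorem r_mem_cycleType_rho (j : Fin m) : r n idx j ∈ (rho n idx).cycleType :=
  mem_cycleType_of_minimalPeriod_eq
    (minimalPeriod_rho_inr_four idx j ⟨0, (two_le_r idx j).trans_lt' two_pos⟩) (two_le_r idx j)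

variable {s : Fin m → ℕ → ℕ} {t : Fin m → ℕ} {x1 x2 : ℕ}

theorem pi1_pow_mul_pi2_pow : pi1 n idx s ^ x1 * pi2 n idx t ^ x2 =
    Equiv.sumCongr (Equiv.sigmaCongrRight fun i : Fin n => finRotate (p i * p (n + i)) ^ x1)
      (Equiv.sigmaCongrRight fun j => Equiv.sigmaCongrRight fun d : Fin 6 =>
        finRotate (r n idx j) ^ (s j d * x1 + t j * x2)) := by
  simp only [pi1, pi2, sumCongr_pow, sigmaCongrRight_pow, sumCongr_mul, sigmaCongrRight_mul,
    Pi.mul_def, ← pow_mul, ← pow_add, ← one_def, one_pow, mul_one]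

theorem minimalPeriod_pi1_pow_mul_pi2_pow_inl (i : Fin n) (a : Fin (p i * p (n + i))) :
    minimalPeriod (pi1 n idx s ^ x1 * pi2 n idx t ^ x2) (Sum.inl ⟨i, a⟩) =
      p i * p (n + i) / (p i * p (n + i)).gcd x1 := by
  rw [pi1_pow_mul_pi2_pow, minimalPeriod_sumCongr_inl, minimalPeriod_sigmaCongrRight,
    minimalPeriod_finRotate_pow]

theorem minimalPeriod_pi1_pow_mul_pi2_pow_inr (j : Fin m) (d : Fin 6) (a : Fin (r n idx j)) :
    minimalPeriod (pi1 n idx s ^ x1 * pi2 n idx t ^ x2) (Sum.inr ⟨j, d, a⟩) =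
      r n idx j / (r n idx j).gcd (s j d * x1 + t j * x2) := by
  rw [pi1_pow_mul_pi2_pow, minimalPeriod_sumCongr_inr, minimalPeriod_sigmaCongrRight,
    minimalPeriod_sigmaCongrRight, minimalPeriod_finRotate_pow]

theorem coprime_of_p_mul_p_mem_cycleType (i : Fin n)
    (h : p i * p (n + i) ∈ (pi1 n idx s ^ x1 * pi2 n idx t ^ x2).cycleType) :
    (p i * p (n + i)).Coprime x1 := by
  obtain ⟨⟨i', a⟩ | ⟨j, d, a⟩, -, hper⟩ := mem_cycleType_iff_exists_minimalPeriod.mp h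
  · rw [minimalPeriod_pi1_pow_mul_pi2_pow_inl] at hper
    obtain rfl := eq_of_p_mul_p_dvd (hper ▸ Nat.div_dvd_of_dvd (Nat.gcd_dvd_left _ _))
    exact (Nat.div_eq_self.mp hper).resolve_left ((two_le_p_mul_p _ _).trans_lt' two_pos).ne'
  · rw [minimalPeriod_pi1_pow_mul_pi2_pow_inr] at hper
    exact absurd ((dvd_mul_left _ _).trans (hper ▸ Nat.div_dvd_of_dvd (Nat.gcd_dvd_left _ _)))
      (not_p_dvd_r idx i j)

theorem exists_coprime_of_r_mem_cycleType (j : Fin m)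
    (h : r n idx j ∈ (pi1 n idx s ^ x1 * pi2 n idx t ^ x2).cycleType) :
    ∃ d : Fin 6, (r n idx j).Coprime (s j d * x1 + t j * x2) := by
  obtain ⟨⟨i, a⟩ | ⟨j', d, a⟩, -, hper⟩ := mem_cycleType_iff_exists_minimalPeriod.mp h
  · rw [minimalPeriod_pi1_pow_mul_pi2_pow_inl] at hper
    exact absurd ((dvd_mul_right _ _).trans (hper ▸ Nat.div_dvd_of_dvd (Nat.gcd_dvd_left _ _)))
      (not_q_dvd_p_mul_p i j)
  · rw [minimalPeriod_pi1_pow_mul_pi2_pow_inr] at hper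
    obtain rfl := eq_of_q_dvd_r idx
      ((dvd_mul_right _ _).trans (hper ▸ Nat.div_dvd_of_dvd (Nat.gcd_dvd_left _ _)))
    exact ⟨d, (Nat.div_eq_self.mp hper).resolve_left ((two_le_r idx j).trans_lt' two_pos).ne'⟩

theorem x1_not_dvd_general
    (n m : ℕ) (idx : Fin m → Fin 3 → Fin n)
    (s : Fin m → ℕ → ℕ) (t : Fin m → ℕ)
    -- `t_j ∈ [0, r_j - 1]`, `t_j ≡ 1 (mod p_{i_a})` for `a ∈ [3]`, `t_j ≡ 0 (mod q_j)`
    (htq : ∀ j : Fin m, t j % q n j = 0)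
    (x1 x2 : ℕ)
    (hct : (pi1 n idx s ^ x1 * pi2 n idx t ^ x2).cycleType = (rho n idx).cycleType) :
    (∀ i : Fin n, ¬ p i.val ∣ x1 ∧ ¬ p (n + i.val) ∣ x1) ∧
      ∀ j : Fin m, ¬ q n j ∣ x1 := by
  have hcop_p (i : Fin n) : (p i * p (n + i)).Coprime x1 :=
    coprime_of_p_mul_p_mem_cycleType idx i (hct ▸ p_mul_p_mem_cycleType_rho idx i)
  refine ⟨fun i => ⟨fun hdvd => ?_, fun hdvd => ?_⟩, fun j hdvd => ?_⟩
  · exact Nat.not_coprime_of_dvd_of_dvd (prime_p i).one_lt (dvd_mul_right _ _) hdvd (hcop_p i)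
  · exact Nat.not_coprime_of_dvd_of_dvd (prime_p _).one_lt (dvd_mul_left _ _) hdvd (hcop_p i)
  · obtain ⟨d, hcop⟩ := exists_coprime_of_r_mem_cycleType idx j (hct ▸ r_mem_cycleType_rho idx j)
    have hq_dvd_exp : q n j ∣ s j d * x1 + t j * x2 :=
      dvd_add (hdvd.mul_left _) ((Nat.dvd_of_mod_eq_zero (htq j)).mul_right _)
    exact Nat.not_coprime_of_dvd_of_dvd (prime_q n j).one_lt (dvd_mul_right _ _) hq_dvd_exp hcop

/-- If `ct(π_1^{x_1} π_2^{x_2}) = ct(ρ)` then for all `i ∈ [n]` and `j ∈ [m]`: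
`x_1 ≢ 0 (mod p_i)`, `x_1 ≢ 0 (mod p_{n+i})` and `x_1 ≢ 0 (mod q_j)`. -/
theorem x1_not_dvd
    (n m : ℕ) (idx : Fin m → Fin 3 → Fin n) (hidx : ∀ j, StrictMono (idx j))
    (s : Fin m → ℕ → ℕ) (t : Fin m → ℕ)
    -- `s j d ∈ [0, r_j - 1]` for `d ∈ [6]` (here zero-indexed, `d ∈ {0,…,5}`)
    (hslt : ∀ j : Fin m, ∀ d : ℕ, d < 6 → s j d < r n idx j)
    -- `s_{j,d} ≡ 1 (mod q_j)` for all `d ∈ [6]`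
    (hsq : ∀ j : Fin m, ∀ d : ℕ, d < 6 → s j d % q n j = 1)
    -- for `a ∈ [3]`: `s_{j,a} ≡ -1 (mod p_{i_a})` and `s_{j,a} ≡ 0 (mod p_{i_b})` for `b ≠ a`
    (hs1 : ∀ j : Fin m, ∀ a b : Fin 3,
      (s j a.val + if a = b then 1 else 0) % p (idx j b) = 0)
    -- `(s_{j,4}, s_{j,5}, s_{j,6}) ≡ (-1,-3,-2) (mod p_{i_1})`, `(-2,-1,-3) (mod p_{i_2})`,
    -- `(-3,-2,-1) (mod p_{i_3})`
    (hs2 : ∀ j : Fin m, ∀ c b : Fin 3,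
      (s j (3 + c.val) + (1 + (3 + b.val - c.val) % 3)) % p (idx j b) = 0)
    -- `t_j ∈ [0, r_j - 1]`, `t_j ≡ 1 (mod p_{i_a})` for `a ∈ [3]`, `t_j ≡ 0 (mod q_j)`
    (htlt : ∀ j : Fin m, t j < r n idx j)
    (htp : ∀ j : Fin m, ∀ a : Fin 3, t j % p (idx j a) = 1)
    (htq : ∀ j : Fin m, t j % q n j = 0)
    (x1 x2 : ℕ)
    (hct : (pi1 n idx s ^ x1 * pi2 n idx t ^ x2).cycleType = (rho n idx).cycleType) :
    (∀ i : Fin n, ¬ p i.val ∣ x1 ∧ ¬ p (n + i.val) ∣ x1) ∧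
      ∀ j : Fin m, ¬ q n j ∣ x1 :=
  x1_not_dvd_general n m idx s t htq x1 x2 hct

end HittingSet
end
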